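/- Fix 1 < p < ∞ with conjugate exponent q (1/p + 1/q = 1). Let b : ℕ → ℂ with 0 < |b_n| < 1 for all n, let a_n = 1 and w_n = 1 for all n (so c_n = b_n − b_{n+1}), and let T : ℓ^p(ℕ) → ℓ^p(ℕ) be a continuous linear operator representing the (unweighted) forward shift F in this setting. Let λ ∈ ℂ with |λ| = 1 and assume ∑_{n=0}^∞ |1 + λ b_n|^q < ∞. Then the formula φ_λ(x) = ∑_{n=0}^∞ x_n (1 + λ b_n) λ^n defines a continuous linear functional on ℓ^p(ℕ) with φ_λ ≠ 0, and the adjoint satisfies T* φ_λ = λ · φ_λ. Consequently, if λ^m = 1 for some m ≥ 1, then φ_λ is a non-trivial periodic vector of T*: (T*)^m φ_λ = φ_λ and φ_λ ≠ 0. -/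

import Mathlib

/-!
Write `f_n(λ) = (1 + b_n λ) λ^n`. By hypothesis `(f_n(λ))_n ∈ ℓ^q`, so by Hölder pairing with it
is a continuous functional `φ_λ` on `ℓ^p`, and `φ_λ(e_n) = f_n(λ) ≠ 0` as `|λ b_n| < 1`.
Since finitely supported sequences are dense in `ℓ^p`, `φ_λ ∘ T = λ φ_λ` reduces to
`φ_λ(T e_n) = λ f_n(λ)`. Beyond index `n + 1` the coordinates of `T e_n` satisfy
`y_{m+1} = -b_m y_m`, which makes the tail of `∑_m f_m(λ) y_m` telescope (`y_m → 0` as `y ∈ ℓ^p`)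
to `λ^{n+2} (b_n - b_{n+1})`; adding the term `f_{n+1}(λ)` gives `λ f_n(λ)`.
-/

open Filter Finset Topology
open scoped ENNReal NNReal

noncomputable section

/-- The auxiliary sequence `c_n = w_{n+1} b_n/a_{n+2} − w_n a_n b_{n+1}/(a_{n+1} a_{n+2})`. -/
def cseq (a b w : ℕ → ℂ) (n : ℕ) : ℂ :=
  w (n + 1) * b n / a (n + 2) - w n * a n * b (n + 1) / (a (n + 1) * a (n + 2))

/-- `T` represents the weighted forward shift `F_w` on `ℓ^p_{a,b}`, transported to
`ℓ^p(ℕ)` via the basis `f_n(z) = (a_n + b_n z) z^n`. -/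
def RepresentsFw (p : ℝ≥0∞) [Fact (1 ≤ p)] (a b w : ℕ → ℂ)
    (T : lp (fun _ : ℕ => ℂ) p →L[ℂ] lp (fun _ : ℕ => ℂ) p) : Prop :=
  (∀ n : ℕ, (T (lp.single p n 1) : ∀ _ : ℕ, ℂ) (n + 1) = w n * a n / a (n + 1)) ∧
  (∀ n m : ℕ, n + 2 ≤ m →
    (T (lp.single p n 1) : ∀ _ : ℕ, ℂ) m =
      (-1 : ℂ) ^ (m - n) * cseq a b w n *
        ∏ k ∈ Finset.range (m - n - 2), b (n + 2 + k) / a (n + 3 + k)) ∧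
  (∀ n m : ℕ, m ≤ n → (T (lp.single p n 1) : ∀ _ : ℕ, ℂ) m = 0)

theorem Memℓp.tendsto_cofinite_zero {α E : Type*} [NormedAddCommGroup E] {p : ℝ≥0∞}
    {f : α → E} (hf : Memℓp f p) (hp : 0 < p.toReal) : Tendsto f cofinite (𝓝 0) := by
  have h := ((hf.summable hp).tendsto_cofinite_zero).rpow_const (p := p.toReal⁻¹)
    (Or.inr (inv_nonneg.2 hp.le))
  rw [Real.zero_rpow (inv_ne_zero hp.ne')] at h
  refine tendsto_zero_iff_norm_tendsto_zero.2 (h.congr fun i => ?_)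
  exact Real.rpow_rpow_inv (norm_nonneg _) hp.ne'

theorem hasSum_sub_succ_of_tendsto {G : Type*} [AddCommGroup G] [TopologicalSpace G]
    [IsTopologicalAddGroup G] [T2Space G] {f : ℕ → G} {l : G}
    (hs : Summable fun n => f n - f (n + 1)) (hf : Tendsto f atTop (𝓝 l)) :
    HasSum (fun n => f n - f (n + 1)) (f 0 - l) := by
  refine hs.hasSum_iff_tendsto_nat.2 ?_
  simpa only [Finset.sum_range_sub'] using tendsto_const_nhds.sub hf

theorem ContinuousLinearMap.comp_pow_of_comp_eq_smul {R M : Type*} [CommSemiring R]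
    [TopologicalSpace M] [AddCommMonoid M] [Module R M] [TopologicalSpace R] [ContinuousMul R]
    {φ : M →L[R] R} {T : M →L[R] M} {c : R} (h : φ.comp T = c • φ) (m : ℕ) :
    φ.comp (T ^ m) = c ^ m • φ := by
  induction m with
  | zero => simp [ContinuousLinearMap.one_def]
  | succ m ih =>
    rw [pow_succ, ContinuousLinearMap.mul_def, ← ContinuousLinearMap.comp_assoc, ih,
      ContinuousLinearMap.smul_comp, h, smul_smul, ← pow_succ]

namespace lp

variable {ι 𝕜 : Type*} [RCLike 𝕜] {p q : ℝ≥0∞}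

theorem summable_mul_of_holderConjugate [p.HolderConjugate q] (g : lp (fun _ : ι => 𝕜) q)
    (x : lp (fun _ : ι => 𝕜) p) : Summable fun i => g i * x i := by
  have h := (lp.memℓp (holder 1 (fun _ => ContinuousLinearMap.mul 𝕜 𝕜) (K := 1)
    (fun _ => ContinuousLinearMap.opNorm_mul_le 𝕜 𝕜) g x)).summable (by simp)
  simp only [holder_coe, ContinuousLinearMap.mul_apply', ENNReal.toReal_one, Real.rpow_one] at h
  exact h.of_norm

variable [Fact (1 ≤ p)] [Fact (1 ≤ q)] [p.HolderConjugate q]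

def pairingWith (g : lp (fun _ : ι => 𝕜) q) : lp (fun _ : ι => 𝕜) p →L[𝕜] 𝕜 :=
  dualPairing q p (fun _ => ContinuousLinearMap.mul 𝕜 𝕜) (K := 1)
    (fun _ => ContinuousLinearMap.opNorm_mul_le 𝕜 𝕜) g

theorem pairingWith_apply (g : lp (fun _ : ι => 𝕜) q) (x : lp (fun _ : ι => 𝕜) p) :
    pairingWith g x = ∑' i, g i * x i :=
  rfl

theorem pairingWith_single [DecidableEq ι] (g : lp (fun _ : ι => 𝕜) q) (i : ι) (c : 𝕜) :
    pairingWith g (lp.single p i c) = g i * c := by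
  rw [pairingWith_apply, tsum_eq_single i fun j hj => by simp [hj],
    lp.single_apply_self]

end lp

/-- `f_n(λ)` for the basis `f_n(z) = (1 + b_n z) z^n`. -/
def basisAt (b : ℕ → ℂ) (lam : ℂ) (n : ℕ) : ℂ :=
  (1 + lam * b n) * lam ^ n

section basisAt

variable {b : ℕ → ℂ} {lam : ℂ}

theorem norm_basisAt (hlam : ‖lam‖ = 1) (n : ℕ) : ‖basisAt b lam n‖ = ‖1 + lam * b n‖ := by
  simp [basisAt, hlam]

theorem basisAt_ne_zero {n : ℕ} (hb : ‖b n‖ < 1) (hlam : ‖lam‖ = 1) : basisAt b lam n ≠ 0 := by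
  have hlam0 : lam ≠ 0 := norm_ne_zero_iff.1 (by simp [hlam])
  refine mul_ne_zero (fun h => ?_) (pow_ne_zero n hlam0)
  have : ‖lam * b n‖ = 1 := by rw [eq_neg_of_add_eq_zero_right h, norm_neg, norm_one]
  simp only [norm_mul, hlam, one_mul] at this
  exact hb.ne this

theorem memℓp_basisAt {q : ℝ} (hq : 0 < q) (hlam : ‖lam‖ = 1)
    (hsum : Summable fun n => ‖1 + lam * b n‖ ^ q) :
    Memℓp (basisAt b lam) (ENNReal.ofReal q) :=
  memℓp_gen (by simpa [norm_basisAt hlam, ENNReal.toReal_ofReal hq.le] using hsum)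

/-- Under the recursion, `f_m(λ) y_m = λ^m y_m - λ^{m+1} y_{m+1}`. -/
theorem tsum_basisAt_mul_nat_add {y : ℕ → ℂ} {N : ℕ}
    (hs : Summable fun m => basisAt b lam m * y m)
    (hrec : ∀ m, N ≤ m → y (m + 1) = -b m * y m)
    (hy : Tendsto (fun m => lam ^ m * y m) atTop (𝓝 0)) :
    ∑' m, basisAt b lam (m + N) * y (m + N) = lam ^ N * y N := by
  set w : ℕ → ℂ := fun m => lam ^ (m + N) * y (m + N)
  have hterm : ∀ m, basisAt b lam (m + N) * y (m + N) = w m - w (m + 1) := fun m => by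
    simp only [w, basisAt, Nat.add_right_comm m 1 N, hrec (m + N) (by omega)]
    ring
  have hw : Tendsto w atTop (𝓝 0) := hy.comp (tendsto_add_atTop_nat N)
  simp only [hterm]
  have hs' : Summable fun m => w m - w (m + 1) := by
    simpa only [hterm] using (summable_nat_add_iff N).2 hs
  simpa [w] using (hasSum_sub_succ_of_tendsto hs' hw).tsum_eq

end basisAt

namespace RepresentsFw

variable {p : ℝ≥0∞} [Fact (1 ≤ p)] {b : ℕ → ℂ}
  {T : lp (fun _ : ℕ => ℂ) p →L[ℂ] lp (fun _ : ℕ => ℂ) p}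

theorem apply_single_add_one (hT : RepresentsFw p (fun _ => 1) b (fun _ => 1) T) (n : ℕ) :
    (T (lp.single p n 1) : ℕ → ℂ) (n + 1) = 1 := by
  simpa using hT.1 n

theorem apply_single_add_two (hT : RepresentsFw p (fun _ => 1) b (fun _ => 1) T) (n : ℕ) :
    (T (lp.single p n 1) : ℕ → ℂ) (n + 2) = b n - b (n + 1) := by
  simpa [cseq] using hT.2.1 n (n + 2) le_rfl

theorem apply_single_succ (hT : RepresentsFw p (fun _ => 1) b (fun _ => 1) T) {n m : ℕ}
    (hm : n + 2 ≤ m) :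
    (T (lp.single p n 1) : ℕ → ℂ) (m + 1) = -b m * (T (lp.single p n 1) : ℕ → ℂ) m := by
  obtain ⟨j, rfl⟩ := Nat.exists_eq_add_of_le hm
  rw [hT.2.1 n _ hm, hT.2.1 n _ (by omega), show n + 2 + j + 1 - n - 2 = j + 1 by omega,
    show n + 2 + j - n - 2 = j by omega, Finset.prod_range_succ,
    show n + 2 + j + 1 - n = (n + 2 + j - n) + 1 by omega, pow_succ]
  simp only [div_one]
  ring

variable {q : ℝ≥0∞} [Fact (1 ≤ q)] [p.HolderConjugate q] {lam : ℂ}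

theorem pairingWith_apply_single (hT : RepresentsFw p (fun _ => 1) b (fun _ => 1) T)
    (hp : p ≠ ⊤) (hlam : ‖lam‖ ≤ 1) {G : lp (fun _ : ℕ => ℂ) q} (hG : ⇑G = basisAt b lam)
    (n : ℕ) : lp.pairingWith G (T (lp.single p n 1)) = lam * basisAt b lam n := by
  have hzero : ∀ m ≤ n, (T (lp.single p n 1) : ℕ → ℂ) m = 0 := hT.2.2 n
  have hrec : ∀ m, n + 2 ≤ m → _ := fun m hm => apply_single_succ hT hm
  have h1 := apply_single_add_one hT n
  have h2 := apply_single_add_two hT n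
  set y : ℕ → ℂ := ⇑(T (lp.single p n 1))
  have hs : Summable fun m => basisAt b lam m * y m := by
    simpa only [hG] using lp.summable_mul_of_holderConjugate G (T (lp.single p n 1))
  have hy : Tendsto (fun m => lam ^ m * y m) atTop (𝓝 0) := by
    have hy0 : Tendsto y atTop (𝓝 0) := by
      rw [← Nat.cofinite_eq_atTop]
      exact (lp.memℓp _).tendsto_cofinite_zero
        (ENNReal.toReal_pos (zero_lt_one.trans_le Fact.out).ne' hp)
    refine squeeze_zero_norm (fun m => ?_) (tendsto_norm_zero.comp hy0)
    rw [norm_mul, norm_pow]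
    exact mul_le_of_le_one_left (norm_nonneg _) (pow_le_one₀ (norm_nonneg _) hlam)
  have hhead : ∑ m ∈ Finset.range (n + 2), basisAt b lam m * y m = basisAt b lam (n + 1) := by
    rw [Finset.sum_range_succ, Finset.sum_eq_zero fun m hm => by
      rw [hzero m (Nat.lt_succ_iff.1 (Finset.mem_range.1 hm)), mul_zero], h1, zero_add, mul_one]
  rw [lp.pairingWith_apply, hG, ← hs.sum_add_tsum_nat_add (n + 2), hhead,
    tsum_basisAt_mul_nat_add hs hrec hy, h2]
  simp only [basisAt]
  ring

theorem pairingWith_comp (hT : RepresentsFw p (fun _ => 1) b (fun _ => 1) T) (hp : p ≠ ⊤)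
    (hlam : ‖lam‖ ≤ 1) {G : lp (fun _ : ℕ => ℂ) q} (hG : ⇑G = basisAt b lam) :
    (lp.pairingWith G).comp T = lam • lp.pairingWith G := by
  refine lp.ext_continuousLinearMap hp fun n => ContinuousLinearMap.ext_ring ?_
  simp [pairingWith_apply_single hT hp hlam hG, lp.pairingWith_single, hG]

end RepresentsFw

/-- **Unimodular eigenvectors and periodic vectors of `F^*`.**  Take `a_n = 1`, `w_n = 1`,
`0 < |b_n| < 1`, and let `T` represent the unweighted forward shift.  If `|λ| = 1` and
`∑_n |1 + λ b_n|^q < ∞` (with `q` conjugate to `p`), then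
`φ_λ(x) = ∑_n x_n (1 + λ b_n) λ^n` is a nonzero continuous linear functional with
`T* φ_λ = λ φ_λ`; in particular if `λ^m = 1` with `m ≥ 1`, then `φ_λ` is a non-trivial
periodic vector of `T*`. -/
theorem adjoint_eigenvector_periodic (p : ℝ≥0∞) [Fact (1 ≤ p)]
    (hp : 1 < p) (hp' : p ≠ ⊤) (q : ℝ) (hq : 1 / p.toReal + 1 / q = 1)
    (b : ℕ → ℂ) (hb : ∀ n, 0 < ‖b n‖ ∧ ‖b n‖ < 1)
    (T : lp (fun _ : ℕ => ℂ) p →L[ℂ] lp (fun _ : ℕ => ℂ) p)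
    (hT : RepresentsFw p (fun _ => 1) b (fun _ => 1) T)
    (lam : ℂ) (hlam : ‖lam‖ = 1)
    (hsum : Summable fun n : ℕ => ‖1 + lam * b n‖ ^ q) :
    ∃ φ : lp (fun _ : ℕ => ℂ) p →L[ℂ] ℂ,
      (∀ x : lp (fun _ : ℕ => ℂ) p,
        φ x = ∑' n : ℕ, (x : ∀ _ : ℕ, ℂ) n * (1 + lam * b n) * lam ^ n) ∧
      φ ≠ 0 ∧ φ.comp T = lam • φ ∧
      ∀ m : ℕ, 1 ≤ m → lam ^ m = 1 → φ.comp (T ^ m) = φ := by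
  have hpq : p.toReal.HolderConjugate q := Real.holderConjugate_iff.2
    ⟨by simpa using ENNReal.toReal_strict_mono hp' hp, by simpa using hq⟩
  have : p.HolderConjugate (ENNReal.ofReal q) := by
    simpa [ENNReal.ofReal_toReal hp'] using hpq.ennrealOfReal
  have : Fact (1 ≤ ENNReal.ofReal q) := ⟨ENNReal.one_le_ofReal.2 hpq.symm.lt.le⟩
  let G : lp (fun _ : ℕ => ℂ) (ENNReal.ofReal q) :=
    ⟨basisAt b lam, memℓp_basisAt hpq.symm.pos hlam hsum⟩
  have hφ : (lp.pairingWith G).comp T = lam • lp.pairingWith G :=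
    RepresentsFw.pairingWith_comp hT hp' hlam.le rfl
  refine ⟨lp.pairingWith G, fun x => ?_, fun h => ?_, hφ, fun m _ hm => ?_⟩
  · exact (lp.pairingWith_apply G x).trans (tsum_congr fun n => by simp only [G, basisAt]; ring)
  · have h0 := lp.pairingWith_single (p := p) G 0 1
    rw [h, mul_one] at h0
    exact basisAt_ne_zero (hb 0).2 hlam h0.symm
  · rw [ContinuousLinearMap.comp_pow_of_comp_eq_smul hφ, hm, one_smul]
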